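/- Let p_S(x,y,z) = p_S(x,y)p(z|x) and p_T(x,y,z) = p_T(x,y)p(z|x) share the representation kernel p(z|x). Assume: (i) I_S(z;y) = I_S(x;y); (ii) p_S(y|x) = E_{p(z|x)}[p_S(y|z)] for all x,y; (iii) p_T(x,y)/p_S(x,y) ≤ N < ∞. Then E_{p_T(z)}[KL(p_T(y|z)‖p_S(y|z))] ≤ E_{p_T(x)}[KL(p_T(y|x)‖p_S(y|x))]. -/

import Mathlib

/-!
Under the source distribution, consistency `p_S(y|x) = ∫ p(z|x) p_S(y|z) dz` and Bayes' rule
`p_S(y|z) = ∫ p_S(x|z) p_S(y|x) dx` let Jensen's inequality for the concave `t ↦ log (1 + t)`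
(chosen because `0 ≤ log (1 + t) ≤ t` keeps every integral finite) run in both directions, so
the energies `∫∫ p_S(x) log (1 + p_S(y|x))` and `∫∫ p_S(z) log (1 + p_S(y|z))` coincide. The
second Jensen inequality is therefore an equality, which forces `p_S(y|z) = p_S(y|x)` whenever
`p(z|x) > 0`. Consequently `p_T(z) p_S(y|z) = ∫ p(z|x) p_T(x) p_S(y|x) dx`, while
`p_T(z,y) = ∫ p(z|x) p_T(x,y) dx`, so the log-sum inequality bounds the `z`-side KL integrand by
the channel average of the `x`-side one, and integrating out the channel gives the claim.
-/

open MeasureTheory Real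
open scoped ENNReal

-- The correction `b - a` makes the KL integrand pointwise nonnegative without changing its
-- integral between two probability densities.
noncomputable def klTerm (a b : ℝ) : ℝ := a * log (a / b) + (b - a)

@[fun_prop]
lemma Measurable.klTerm {β : Type*} [MeasurableSpace β] {f g : β → ℝ} (hf : Measurable f)
    (hg : Measurable g) : Measurable fun x => klTerm (f x) (g x) := by
  unfold _root_.klTerm; fun_prop

lemma klTerm_zero_left (b : ℝ) : klTerm 0 b = b := by simp [klTerm]

lemma klTerm_mul_mul (c a b : ℝ) : klTerm (c * a) (c * b) = c * klTerm a b := by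
  rcases eq_or_ne c 0 with rfl | hc
  · simp [klTerm]
  · simp only [klTerm, mul_div_mul_left _ _ hc]; ring

/-- The variational lower bound behind the log-sum inequality (equality at `c = a / b`). -/
lemma mul_log_add_le_klTerm {a b c : ℝ} (ha : 0 ≤ a) (hb : 0 ≤ b) (hab : b = 0 → a = 0)
    (hc : 0 < c) : a * log c + (1 - c) * b ≤ klTerm a b := by
  rcases ha.eq_or_lt with rfl | ha
  · rw [klTerm_zero_left]; nlinarith
  have hb : 0 < b := hb.lt_of_ne fun h => ha.ne' (hab h.symm)
  have key := log_le_sub_one_of_pos (show 0 < c * b / a by positivity)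
  rw [log_div (by positivity) ha.ne', log_mul hc.ne' hb.ne'] at key
  have hcb : a * (c * b / a - 1) = c * b - a := by field_simp
  rw [klTerm, log_div ha.ne' hb.ne']
  nlinarith [mul_le_mul_of_nonneg_left key ha.le]

lemma klTerm_nonneg {a b : ℝ} (ha : 0 ≤ a) (hb : 0 ≤ b) (hab : b = 0 → a = 0) :
    0 ≤ klTerm a b := by
  simpa using mul_log_add_le_klTerm ha hb hab one_pos

lemma klTerm_le_mul_log_add {a b C : ℝ} (ha : 0 ≤ a) (hb : 0 < b) (hab : a ≤ C * b) :
    klTerm a b ≤ a * log C + b := by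
  rcases ha.eq_or_lt with rfl | ha
  · simp [klTerm_zero_left]
  have hC : a / b ≤ C := (div_le_iff₀ hb).2 hab
  have := mul_le_mul_of_nonneg_left (log_le_log (by positivity) hC) ha.le
  rw [klTerm]; linarith

-- Integrating this tangent-line gap against a probability weight gives Jensen's inequality for
-- `log (1 + ·)` together with its equality case.
noncomputable def logTangentGap (m t : ℝ) : ℝ := log (1 + m) + (t - m) / (1 + m) - log (1 + t)

lemma logTangentGap_eq {m t : ℝ} (hm : -1 < m) (ht : -1 < t) :
    logTangentGap m t = (1 + t) / (1 + m) - 1 - log ((1 + t) / (1 + m)) := by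
  have hm' : 1 + m ≠ 0 := by linarith
  rw [logTangentGap, log_div (by linarith) hm']
  field_simp
  ring

lemma logTangentGap_nonneg {m t : ℝ} (hm : -1 < m) (ht : -1 < t) : 0 ≤ logTangentGap m t := by
  rw [logTangentGap_eq hm ht]
  linarith [log_le_sub_one_of_pos
    (show 0 < (1 + t) / (1 + m) from div_pos (by linarith) (by linarith))]

lemma eq_of_logTangentGap_eq_zero {m t : ℝ} (hm : -1 < m) (ht : -1 < t)
    (h : logTangentGap m t = 0) : t = m := by
  by_contra hne
  have hm' : 0 < 1 + m := by linarith
  have hr : (1 + t) / (1 + m) ≠ 1 := by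
    rw [Ne, div_eq_one_iff_eq hm'.ne']; intro h; exact hne (by linarith)
  rw [logTangentGap_eq hm ht] at h
  linarith [log_lt_sub_one_of_pos (div_pos (by linarith) hm') hr]

lemma log_one_add_le_self {t : ℝ} (ht : -1 < t) : log (1 + t) ≤ t := by
  linarith [log_le_sub_one_of_pos (show 0 < 1 + t by linarith)]

section Integration

variable {α : Type*} [MeasurableSpace α] {μ : Measure α}

lemma ofReal_integral_le_lintegral_ofReal (f : α → ℝ) :
    ENNReal.ofReal (∫ x, f x ∂μ) ≤ ∫⁻ x, ENNReal.ofReal (f x) ∂μ := by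
  by_cases hf : Integrable f μ
  · rw [integral_eq_lintegral_pos_part_sub_lintegral_neg_part hf]
    refine (ENNReal.ofReal_le_ofReal (sub_le_self _ ENNReal.toReal_nonneg)).trans ?_
    exact ENNReal.ofReal_toReal_le
  · simp [integral_undef hf]

lemma integral_add_of_integral_eq_zero {f g : α → ℝ} (hg : Integrable g μ)
    (hg0 : ∫ x, g x ∂μ = 0) : ∫ x, (f x + g x) ∂μ = ∫ x, f x ∂μ := by
  by_cases hf : Integrable f μ
  · rw [integral_add hf hg, hg0, add_zero]
  · have hfg : ¬ Integrable (fun x => f x + g x) μ := fun h =>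
      hf ((h.sub hg).congr (.of_forall fun x => by simp))
    rw [integral_undef hf, integral_undef hfg]

theorem ofReal_klTerm_integral_le_lintegral {a b : α → ℝ} (ha : Integrable a μ)
    (hb : Integrable b μ) (ha0 : ∀ x, 0 ≤ a x) (hb0 : ∀ x, 0 ≤ b x)
    (hab : ∀ x, b x = 0 → a x = 0) :
    ENNReal.ofReal (klTerm (∫ x, a x ∂μ) (∫ x, b x ∂μ))
      ≤ ∫⁻ x, ENNReal.ofReal (klTerm (a x) (b x)) ∂μ := by
  rcases (integral_nonneg (f := a) ha0).eq_or_lt with hA | hA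
  · have ha_ae : a =ᵐ[μ] 0 := (integral_eq_zero_iff_of_nonneg ha0 ha).1 hA.symm
    rw [← hA, klTerm_zero_left, ofReal_integral_eq_lintegral_ofReal hb (.of_forall hb0)]
    refine (lintegral_congr_ae ?_).le
    filter_upwards [ha_ae] with x hx
    rw [hx, Pi.zero_apply, klTerm_zero_left]
  have hB : 0 < ∫ x, b x ∂μ := by
    refine (integral_nonneg (f := b) hb0).lt_of_ne fun hB => hA.ne' ?_
    have hb_ae : b =ᵐ[μ] 0 := (integral_eq_zero_iff_of_nonneg hb0 hb).1 hB.symm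
    exact integral_eq_zero_of_ae (hb_ae.mono fun x hx => hab x hx)
  set c := (∫ x, a x ∂μ) / ∫ x, b x ∂μ
  have hc : 0 < c := div_pos hA hB
  calc ENNReal.ofReal (klTerm (∫ x, a x ∂μ) (∫ x, b x ∂μ))
      = ENNReal.ofReal (∫ x, (a x * log c + (1 - c) * b x) ∂μ) := by
        rw [integral_add (ha.mul_const _) (hb.const_mul _), integral_mul_const,
          integral_const_mul, klTerm]
        congr 1
        linear_combination div_mul_cancel₀ (∫ x, a x ∂μ) hB.ne'
    _ ≤ ∫⁻ x, ENNReal.ofReal (a x * log c + (1 - c) * b x) ∂μ :=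
        ofReal_integral_le_lintegral_ofReal _
    _ ≤ ∫⁻ x, ENNReal.ofReal (klTerm (a x) (b x)) ∂μ :=
        lintegral_mono fun x =>
          ENNReal.ofReal_le_ofReal (mul_log_add_le_klTerm (ha0 x) (hb0 x) (hab x) hc)

lemma integrable_klTerm_of_le_mul {a b : α → ℝ} (ha : Integrable a μ) (hb : Integrable b μ)
    (ha0 : ∀ x, 0 ≤ a x) (hb0 : ∀ x, 0 < b x) {C : ℝ} (hab : ∀ x, a x ≤ C * b x) :
    Integrable (fun x => klTerm (a x) (b x)) μ := by
  refine ((ha.mul_const (log C)).add hb).mono'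
    ((measurable_fst.klTerm measurable_snd).comp_aemeasurable
      (ha.aemeasurable.prodMk hb.aemeasurable)).aestronglyMeasurable (.of_forall fun x => ?_)
  rw [norm_of_nonneg (klTerm_nonneg (ha0 x) (hb0 x).le fun h => absurd h (hb0 x).ne')]
  exact klTerm_le_mul_log_add (ha0 x) (hb0 x) (hab x)

end Integration

section Jensen

variable {α : Type*} [MeasurableSpace α] {μ : Measure α} {w f : α → ℝ}

lemma integrable_mul_log_one_add (hw : Measurable w) (hf : Measurable f) (hw0 : ∀ x, 0 ≤ w x)
    (hf0 : ∀ x, 0 ≤ f x) (hwf : Integrable (fun x => w x * f x) μ) :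
    Integrable (fun x => w x * log (1 + f x)) μ := by
  refine hwf.mono' (by fun_prop) (.of_forall fun x => ?_)
  have h0 : 0 ≤ log (1 + f x) := log_nonneg (by linarith [hf0 x])
  rw [norm_of_nonneg (mul_nonneg (hw0 x) h0)]
  exact mul_le_mul_of_nonneg_left (log_one_add_le_self (by linarith [hf0 x])) (hw0 x)

lemma integral_mul_logTangentGap (hw : Measurable w) (hf : Measurable f) (hw0 : ∀ x, 0 ≤ w x)
    (hf0 : ∀ x, 0 ≤ f x) (hw1 : ∫ x, w x ∂μ = 1) (hwf : Integrable (fun x => w x * f x) μ) (m : ℝ) :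
    Integrable (fun x => w x * logTangentGap m (f x)) μ ∧
      ∫ x, w x * logTangentGap m (f x) ∂μ
        = log (1 + m) + ((∫ x, w x * f x ∂μ) - m) / (1 + m) - ∫ x, w x * log (1 + f x) ∂μ := by
  have hwi : Integrable w μ := .of_integral_ne_zero (by rw [hw1]; exact one_ne_zero)
  have hlog := integrable_mul_log_one_add hw hf hw0 hf0 hwf
  set c := log (1 + m) - m / (1 + m)
  have hlin : Integrable (fun x => c * w x + (1 + m)⁻¹ * (w x * f x)) μ :=
    (hwi.const_mul _).add (hwf.const_mul _)
  have heq : (fun x => w x * logTangentGap m (f x)) = fun x =>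
      (c * w x + (1 + m)⁻¹ * (w x * f x)) - w x * log (1 + f x) := by
    ext x; simp only [c, logTangentGap]; ring
  rw [heq]
  refine ⟨hlin.sub hlog, ?_⟩
  rw [integral_sub hlin hlog, integral_add (hwi.const_mul _) (hwf.const_mul _), integral_const_mul,
    integral_const_mul, hw1]
  ring

theorem integral_mul_log_one_add_le (hw : Measurable w) (hf : Measurable f)
    (hw0 : ∀ x, 0 ≤ w x) (hf0 : ∀ x, 0 ≤ f x) (hw1 : ∫ x, w x ∂μ = 1)
    (hwf : Integrable (fun x => w x * f x) μ) :
    ∫ x, w x * log (1 + f x) ∂μ ≤ log (1 + ∫ x, w x * f x ∂μ) := by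
  have hm0 : 0 ≤ ∫ x, w x * f x ∂μ := integral_nonneg fun x => mul_nonneg (hw0 x) (hf0 x)
  have hm : -1 < ∫ x, w x * f x ∂μ := by linarith
  have hgap := (integral_mul_logTangentGap hw hf hw0 hf0 hw1 hwf (∫ x, w x * f x ∂μ)).2
  have : 0 ≤ ∫ x, w x * logTangentGap (∫ x, w x * f x ∂μ) (f x) ∂μ := integral_nonneg fun x =>
    mul_nonneg (hw0 x) (logTangentGap_nonneg hm (show -1 < f x by linarith [hf0 x]))
  rw [hgap, sub_self, zero_div, add_zero] at this
  linarith

theorem ae_eq_integral_of_log_one_add_le (hw : Measurable w) (hf : Measurable f)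
    (hw0 : ∀ x, 0 ≤ w x) (hf0 : ∀ x, 0 ≤ f x) (hw1 : ∫ x, w x ∂μ = 1)
    (hwf : Integrable (fun x => w x * f x) μ)
    (h : log (1 + ∫ x, w x * f x ∂μ) ≤ ∫ x, w x * log (1 + f x) ∂μ) :
    ∀ᵐ x ∂μ, w x ≠ 0 → f x = ∫ x, w x * f x ∂μ := by
  set m := ∫ x, w x * f x ∂μ
  have hm0 : 0 ≤ m := integral_nonneg fun x => mul_nonneg (hw0 x) (hf0 x)
  have hm : -1 < m := by linarith
  have hf1 : ∀ x, -1 < f x := fun x => by linarith [hf0 x]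
  obtain ⟨hint, hgap⟩ := integral_mul_logTangentGap hw hf hw0 hf0 hw1 hwf m
  have hnonneg : 0 ≤ fun x => w x * logTangentGap m (f x) := fun x =>
    mul_nonneg (hw0 x) (logTangentGap_nonneg hm (hf1 x))
  have hzero : ∫ x, w x * logTangentGap m (f x) ∂μ = 0 := by
    refine le_antisymm ?_ (integral_nonneg hnonneg)
    rw [hgap, sub_self, zero_div, add_zero]; linarith
  filter_upwards [(integral_eq_zero_iff_of_nonneg hnonneg hint).1 hzero] with x hx hwx
  exact eq_of_logTangentGap_eq_zero hm (hf1 x) ((mul_eq_zero.1 hx).resolve_left hwx)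

end Jensen

section Fubini

variable {X Y Z : Type*} [MeasurableSpace X] [MeasurableSpace Y] [MeasurableSpace Z]
  {μX : Measure X} {μY : Measure Y} {μZ : Measure Z}

lemma lintegral_lintegral_lintegral_comm [SFinite μX] [SFinite μY] [SFinite μZ]
    {F : X → Y → Z → ℝ≥0∞} (hF : Measurable fun q : X × Y × Z => F q.1 q.2.1 q.2.2) :
    ∫⁻ x, ∫⁻ y, ∫⁻ z, F x y z ∂μZ ∂μY ∂μX = ∫⁻ z, ∫⁻ y, ∫⁻ x, F x y z ∂μX ∂μY ∂μZ := by
  calc ∫⁻ x, ∫⁻ y, ∫⁻ z, F x y z ∂μZ ∂μY ∂μX = ∫⁻ x, ∫⁻ z, ∫⁻ y, F x y z ∂μY ∂μZ ∂μX :=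
        lintegral_congr fun x =>
          lintegral_lintegral_swap (hF.comp measurable_prodMk_left).aemeasurable
    _ = ∫⁻ z, ∫⁻ x, ∫⁻ y, F x y z ∂μY ∂μX ∂μZ :=
        lintegral_lintegral_swap
          (Measurable.lintegral_prod_right' (f := fun q : (X × Z) × Y => F q.1.1 q.2 q.1.2)
            (hF.comp (measurable_fst.fst.prodMk (measurable_snd.prodMk measurable_fst.snd)))
            ).aemeasurable
    _ = ∫⁻ z, ∫⁻ y, ∫⁻ x, F x y z ∂μX ∂μY ∂μZ :=
        lintegral_congr fun z => lintegral_lintegral_swap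
          (hF.comp (measurable_fst.prodMk (measurable_snd.prodMk measurable_const))).aemeasurable

lemma ae_ae_eq_of_ae_ae_le_of_lintegral_le [SFinite μY] {f g : Z → Y → ℝ≥0∞}
    (hfg : ∀ᵐ z ∂μZ, ∀ᵐ y ∂μY, f z y ≤ g z y)
    (hf : ∫⁻ z, ∫⁻ y, f z y ∂μY ∂μZ ≠ ∞) (hg : Measurable (Function.uncurry g))
    (hgf : ∫⁻ z, ∫⁻ y, g z y ∂μY ∂μZ ≤ ∫⁻ z, ∫⁻ y, f z y ∂μY ∂μZ) :
    ∀ᵐ z ∂μZ, ∀ᵐ y ∂μY, f z y = g z y := by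
  have hg' : Measurable fun z => ∫⁻ y, g z y ∂μY := hg.lintegral_prod_right'
  have houter : (fun z => ∫⁻ y, f z y ∂μY) =ᵐ[μZ] fun z => ∫⁻ y, g z y ∂μY :=
    ae_eq_of_ae_le_of_lintegral_le (hfg.mono fun z h => lintegral_mono_ae h) hf
      hg'.aemeasurable hgf
  have hfin : ∀ᵐ z ∂μZ, ∫⁻ y, g z y ∂μY < ∞ := ae_lt_top hg' (ne_top_of_le_ne_top hf hgf)
  filter_upwards [hfg, houter, hfin] with z hle heq hlt
  exact ae_eq_of_ae_le_of_lintegral_le hle (heq ▸ hlt.ne) hg.of_uncurry_left.aemeasurable heq.ge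

end Fubini

section Densities

variable {A X Y Z : Type*}

noncomputable def pushDensity [MeasurableSpace X] (μX : Measure X) (k : X → Z → ℝ)
    (q : X × Y → ℝ) (w : Z × Y) : ℝ :=
  ∫ x, q (x, w.2) * k x w.1 ∂μX

lemma pushDensity_nonneg [MeasurableSpace X] {μX : Measure X} {k : X → Z → ℝ}
    (hk : ∀ x z, 0 ≤ k x z) {q : X × Y → ℝ} (hq : ∀ w, 0 ≤ q w) (w : Z × Y) :
    0 ≤ pushDensity μX k q w :=
  integral_nonneg fun _ => mul_nonneg (hq _) (hk _ _)

variable [MeasurableSpace Y] {μY : Measure Y}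

noncomputable def marginal (ν : Measure Y) (q : A × Y → ℝ) (a : A) : ℝ := ∫ y, q (a, y) ∂ν

noncomputable def condDensity (ν : Measure Y) (q : A × Y → ℝ) (a : A) (y : Y) : ℝ :=
  q (a, y) / marginal ν q a

noncomputable def condKL (ν : Measure Y) (t s : A × Y → ℝ) (a : A) : ℝ :=
  ∫ y, condDensity ν t a y * log (condDensity ν t a y / condDensity ν s a y) ∂ν

noncomputable def posterior [MeasurableSpace X] (μX : Measure X) (μY : Measure Y)
    (k : X → Z → ℝ) (p : X × Y → ℝ) (z : Z) (x : X) : ℝ :=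
  marginal μY p x * k x z / marginal μY (pushDensity μX k p) z

lemma marginal_nonneg {q : A × Y → ℝ} (hq : ∀ w, 0 ≤ q w) (a : A) : 0 ≤ marginal μY q a :=
  integral_nonneg fun _ => hq _

lemma condDensity_nonneg {q : A × Y → ℝ} (hq : ∀ w, 0 ≤ q w) (a : A) (y : Y) :
    0 ≤ condDensity μY q a y :=
  div_nonneg (hq _) (marginal_nonneg hq a)

lemma posterior_nonneg [MeasurableSpace X] {μX : Measure X} {k : X → Z → ℝ}
    (hk : ∀ x z, 0 ≤ k x z) {p : X × Y → ℝ} (hp : ∀ w, 0 ≤ p w) (z : Z) (x : X) :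
    0 ≤ posterior μX μY k p z x :=
  div_nonneg (mul_nonneg (marginal_nonneg hp x) (hk x z))
    (marginal_nonneg (pushDensity_nonneg hk hp) z)

lemma measurable_marginal [MeasurableSpace A] [SFinite μY] {q : A × Y → ℝ} (hq : Measurable q) :
    Measurable (marginal μY q) :=
  hq.stronglyMeasurable.integral_prod_right'.measurable

lemma measurable_condDensity [MeasurableSpace A] [SFinite μY] {q : A × Y → ℝ}
    (hq : Measurable q) : Measurable (Function.uncurry (condDensity μY q)) :=
  hq.div ((measurable_marginal hq).comp measurable_fst)

lemma measurable_pushDensity [MeasurableSpace X] [MeasurableSpace Z] {μX : Measure X}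
    [SFinite μX] {k : X → Z → ℝ} (hk : Measurable (Function.uncurry k)) {q : X × Y → ℝ}
    (hq : Measurable q) : Measurable (pushDensity μX k q) :=
  (Measurable.stronglyMeasurable (f := fun p : (Z × Y) × X => q (p.2, p.1.2) * k p.2 p.1.1)
    ((hq.comp (measurable_snd.prodMk measurable_fst.snd)).mul
      (hk.comp (measurable_snd.prodMk measurable_fst.fst)))).integral_prod_right'.measurable

lemma integral_condDensity {q : A × Y → ℝ} {a : A} (ha : marginal μY q a ≠ 0) :
    ∫ y, condDensity μY q a y ∂μY = 1 := by
  simp only [condDensity]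
  rw [integral_div]
  exact div_self ha

lemma integrable_condDensity {q : A × Y → ℝ} {a : A} (ha : marginal μY q a ≠ 0) :
    Integrable (condDensity μY q a) μY :=
  .of_integral_ne_zero (by rw [integral_condDensity ha]; exact one_ne_zero)

lemma marginal_mul_condDensity {q : A × Y → ℝ} {a : A} (ha : marginal μY q a ≠ 0) (y : Y) :
    marginal μY q a * condDensity μY q a y = q (a, y) := by
  rw [condDensity, mul_div_cancel₀ _ ha]

lemma marginal_mul_condKL {s t : A × Y → ℝ} {a : A} (hs : 0 < marginal μY s a)
    (ht : 0 < marginal μY t a) :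
    marginal μY t a * condKL μY t s a
      = ∫ y, klTerm (t (a, y)) (marginal μY t a * condDensity μY s a y) ∂μY := by
  have hti : Integrable (fun y => t (a, y)) μY := .of_integral_ne_zero ht.ne'
  have hcorri : Integrable (fun y => marginal μY t a * condDensity μY s a y - t (a, y)) μY :=
    ((integrable_condDensity hs.ne').const_mul _).sub hti
  have hcorr : ∫ y, (marginal μY t a * condDensity μY s a y - t (a, y)) ∂μY = 0 := by
    rw [integral_sub ((integrable_condDensity hs.ne').const_mul _) hti, integral_const_mul,
      integral_condDensity hs.ne', mul_one]
    exact sub_self _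
  simp only [klTerm]
  rw [integral_add_of_integral_eq_zero hcorri hcorr, condKL, ← integral_const_mul]
  refine integral_congr_ae (.of_forall fun y => ?_)
  have := ht.ne'
  simp only [condDensity, div_div]
  field_simp

lemma integrable_klTerm_condDensity {s t : X × Y → ℝ} {x : X} (hs0 : ∀ w, 0 < s w)
    (ht0 : ∀ w, 0 ≤ t w) (hsx : 0 < marginal μY s x) (htx : 0 < marginal μY t x) {N : ℝ}
    (hts : ∀ y, t (x, y) ≤ N * s (x, y)) :
    Integrable (fun y => klTerm (t (x, y)) (marginal μY t x * condDensity μY s x y)) μY := by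
  refine integrable_klTerm_of_le_mul (C := N * marginal μY s x / marginal μY t x)
    (.of_integral_ne_zero htx.ne') ((integrable_condDensity hsx.ne').const_mul _)
    (fun y => ht0 _) (fun y => mul_pos htx (div_pos (hs0 _) hsx)) fun y => ?_
  have := hsx.ne'
  have := htx.ne'
  calc t (x, y) ≤ N * s (x, y) := hts y
    _ = _ := by simp only [condDensity]; field_simp

lemma lintegral_lintegral_marginal_mul_log_ne_top [MeasurableSpace X] {μX : Measure X}
    [SFinite μY] {p : X × Y → ℝ} (hp : Measurable p) (hp0 : ∀ w, 0 ≤ p w)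
    (hpi : Integrable p (μX.prod μY)) (hpx : ∀ x, 0 < marginal μY p x) :
    ∫⁻ x, ∫⁻ y, ENNReal.ofReal (marginal μY p x * log (1 + condDensity μY p x y)) ∂μY ∂μX
      ≠ ∞ := by
  refine ne_top_of_le_ne_top (b := ∫⁻ x, ∫⁻ y, ENNReal.ofReal (p (x, y)) ∂μY ∂μX) ?_ ?_
  · rw [← lintegral_prod _ hp.ennreal_ofReal.aemeasurable,
      ← ofReal_integral_eq_lintegral_ofReal hpi (.of_forall hp0)]
    exact ENNReal.ofReal_ne_top
  · refine lintegral_mono fun x => lintegral_mono fun y => ENNReal.ofReal_le_ofReal ?_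
    rw [← marginal_mul_condDensity (hpx x).ne' y]
    exact mul_le_mul_of_nonneg_left
      (log_one_add_le_self (by linarith [condDensity_nonneg (μY := μY) hp0 x y]))
      (marginal_nonneg hp0 x)

end Densities

structure IsChannel {X Z : Type*} [MeasurableSpace X] [MeasurableSpace Z] (μZ : Measure Z)
    (k : X → Z → ℝ) : Prop where
  measurable : Measurable (Function.uncurry k)
  nonneg : ∀ x z, 0 ≤ k x z
  integral_eq_one : ∀ x, ∫ z, k x z ∂μZ = 1

namespace IsChannel

variable {X Y Z : Type*} [MeasurableSpace X] [MeasurableSpace Y] [MeasurableSpace Z]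
  {μX : Measure X} {μY : Measure Y} {μZ : Measure Z} {k : X → Z → ℝ}

lemma integrable (hk : IsChannel μZ k) (x : X) : Integrable (k x) μZ :=
  .of_integral_ne_zero (by rw [hk.integral_eq_one]; exact one_ne_zero)

lemma lintegral_ofReal (hk : IsChannel μZ k) (x : X) :
    ∫⁻ z, ENNReal.ofReal (k x z) ∂μZ = 1 := by
  rw [← ofReal_integral_eq_lintegral_ofReal (hk.integrable x) (.of_forall (hk.nonneg x)),
    hk.integral_eq_one, ENNReal.ofReal_one]

lemma lintegral_ofReal_mul_log_le [SFinite μX] [SFinite μY] {p : X × Y → ℝ}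
    (hk : IsChannel μZ k) (hp : Measurable p) (hp0 : ∀ w, 0 < p w)
    (hpx : ∀ x, 0 < marginal μY p x)
    (hcons : ∀ x y, condDensity μY p x y
      = ∫ z, k x z * condDensity μY (pushDensity μX k p) z y ∂μZ) (x : X) (y : Y) :
    ∫⁻ z, ENNReal.ofReal (k x z) * (ENNReal.ofReal (marginal μY p x) *
        ENNReal.ofReal (log (1 + condDensity μY (pushDensity μX k p) z y))) ∂μZ
      ≤ ENNReal.ofReal (marginal μY p x * log (1 + condDensity μY p x y)) := by
  set q := pushDensity μX k p
  have hkm := hk.measurable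
  have hg := measurable_condDensity (μY := μY) (measurable_pushDensity (μX := μX) hkm hp)
  have hg0 : ∀ z, 0 ≤ condDensity μY q z y := fun z =>
    condDensity_nonneg (pushDensity_nonneg hk.nonneg fun w => (hp0 w).le) z y
  have hint : Integrable (fun z => k x z * condDensity μY q z y) μZ :=
    .of_integral_ne_zero (by rw [← hcons]; exact (div_pos (hp0 _) (hpx x)).ne')
  have hJ := integral_mul_log_one_add_le hkm.of_uncurry_left hg.of_uncurry_right
    (hk.nonneg x) hg0 (hk.integral_eq_one x) hint
  rw [← hcons] at hJ
  calc ∫⁻ z, ENNReal.ofReal (k x z) * (ENNReal.ofReal (marginal μY p x) *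
        ENNReal.ofReal (log (1 + condDensity μY q z y))) ∂μZ
      = ENNReal.ofReal (marginal μY p x) *
          ENNReal.ofReal (∫ z, k x z * log (1 + condDensity μY q z y) ∂μZ) := by
        rw [ofReal_integral_eq_lintegral_ofReal
          (integrable_mul_log_one_add hkm.of_uncurry_left hg.of_uncurry_right (hk.nonneg x) hg0
            hint)
          (.of_forall fun z => mul_nonneg (hk.nonneg x z) (log_nonneg (by linarith [hg0 z]))),
          ← lintegral_const_mul _ (by fun_prop)]
        refine lintegral_congr fun z => ?_
        rw [ENNReal.ofReal_mul (hk.nonneg x z)]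
        ring
    _ ≤ ENNReal.ofReal (marginal μY p x) * ENNReal.ofReal (log (1 + condDensity μY p x y)) :=
        mul_le_mul_right (ENNReal.ofReal_le_ofReal hJ) _
    _ = _ := (ENNReal.ofReal_mul (marginal_nonneg (fun w => (hp0 w).le) x)).symm

variable [SFinite μX] [SFinite μY] [SFinite μZ]

lemma lintegral_lintegral_mul (hk : IsChannel μZ k) {g : X → ℝ≥0∞} (hg : Measurable g) :
    ∫⁻ z, ∫⁻ x, ENNReal.ofReal (k x z) * g x ∂μX ∂μZ = ∫⁻ x, g x ∂μX := by
  have hkm := hk.measurable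
  rw [lintegral_lintegral_swap (by fun_prop)]
  refine lintegral_congr fun x => ?_
  rw [lintegral_mul_const _ hkm.of_uncurry_left.ennreal_ofReal, hk.lintegral_ofReal, one_mul]

lemma lintegral_lintegral_lintegral_mul (hk : IsChannel μZ k) {F : X → Y → ℝ≥0∞}
    (hF : Measurable (Function.uncurry F)) :
    ∫⁻ z, ∫⁻ y, ∫⁻ x, ENNReal.ofReal (k x z) * F x y ∂μX ∂μY ∂μZ
      = ∫⁻ x, ∫⁻ y, F x y ∂μY ∂μX := by
  have hkm := hk.measurable
  calc ∫⁻ z, ∫⁻ y, ∫⁻ x, ENNReal.ofReal (k x z) * F x y ∂μX ∂μY ∂μZ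
      = ∫⁻ z, ∫⁻ x, ENNReal.ofReal (k x z) * ∫⁻ y, F x y ∂μY ∂μX ∂μZ := by
        refine lintegral_congr fun z => ?_
        rw [lintegral_lintegral_swap (by fun_prop)]
        exact lintegral_congr fun x => lintegral_const_mul _ hF.of_uncurry_left
    _ = ∫⁻ x, ∫⁻ y, F x y ∂μY ∂μX := hk.lintegral_lintegral_mul hF.lintegral_prod_right'

variable {p : X × Y → ℝ}

lemma ae_integrable_marginal_mul (hk : IsChannel μZ k) (hp : Measurable p) (hp0 : ∀ w, 0 ≤ p w)
    (hpi : Integrable p (μX.prod μY)) :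
    ∀ᵐ z ∂μZ, Integrable (fun x => marginal μY p x * k x z) μX := by
  have hm : Measurable (marginal μY p) := measurable_marginal hp
  have hm0 : ∀ x, 0 ≤ marginal μY p x := marginal_nonneg hp0
  have htot : ∫⁻ z, ∫⁻ x, ENNReal.ofReal (k x z) * ENNReal.ofReal (marginal μY p x) ∂μX ∂μZ
      ≠ ∞ := by
    rw [hk.lintegral_lintegral_mul hm.ennreal_ofReal]
    exact hpi.integral_prod_left.lintegral_lt_top.ne
  have hkm := hk.measurable
  filter_upwards [ae_lt_top (by fun_prop) htot] with z hz
  refine ⟨(hm.mul hkm.of_uncurry_right).aestronglyMeasurable, ?_⟩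
  rw [hasFiniteIntegral_iff_ofReal (.of_forall fun x => mul_nonneg (hm0 x) (hk.nonneg x z))]
  simpa only [ENNReal.ofReal_mul (hm0 _), mul_comm (ENNReal.ofReal (k _ z))] using hz

lemma ae_integrable_mul_prod (hk : IsChannel μZ k) (hp : Measurable p) (hp0 : ∀ w, 0 ≤ p w)
    (hpi : Integrable p (μX.prod μY)) :
    ∀ᵐ z ∂μZ, Integrable (fun w : X × Y => p w * k w.1 z) (μX.prod μY) := by
  have hkm := hk.measurable
  filter_upwards [hk.ae_integrable_marginal_mul hp hp0 hpi] with z hz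
  refine (integrable_prod_iff (hp.mul (hkm.comp (measurable_fst.prodMk measurable_const))
    ).aestronglyMeasurable).2 ⟨?_, hz.congr (.of_forall fun x => ?_)⟩
  · filter_upwards [hpi.prod_right_ae] with x hx using hx.mul_const (k x z)
  · simp only [marginal, ← integral_mul_const]
    exact integral_congr_ae (.of_forall fun y =>
      (norm_of_nonneg (mul_nonneg (hp0 _) (hk.nonneg x z))).symm)

lemma ae_ae_integrable_mul (hk : IsChannel μZ k) (hp : Measurable p) (hp0 : ∀ w, 0 ≤ p w)
    (hpi : Integrable p (μX.prod μY)) :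
    ∀ᵐ z ∂μZ, ∀ᵐ y ∂μY, Integrable (fun x => p (x, y) * k x z) μX :=
  (hk.ae_integrable_mul_prod hp hp0 hpi).mono fun _ hz => hz.prod_left_ae

lemma ae_marginal_pushDensity (hk : IsChannel μZ k) (hp : Measurable p) (hp0 : ∀ w, 0 ≤ p w)
    (hpi : Integrable p (μX.prod μY)) :
    ∀ᵐ z ∂μZ, marginal μY (pushDensity μX k p) z = ∫ x, marginal μY p x * k x z ∂μX := by
  filter_upwards [hk.ae_integrable_mul_prod hp hp0 hpi] with z hz
  simp only [marginal, pushDensity]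
  rw [integral_integral_swap (f := fun y x => p (x, y) * k x z) hz.swap]
  simp only [integral_mul_const]

lemma ae_integral_posterior (hk : IsChannel μZ k) (hp : Measurable p) (hp0 : ∀ w, 0 ≤ p w)
    (hpi : Integrable p (μX.prod μY)) (hpz : ∀ z, 0 < marginal μY (pushDensity μX k p) z) :
    ∀ᵐ z ∂μZ, ∫ x, posterior μX μY k p z x ∂μX = 1 := by
  filter_upwards [hk.ae_marginal_pushDensity hp hp0 hpi] with z hz
  simp only [posterior]
  rw [integral_div, ← hz, div_self (hpz z).ne']

lemma ae_ae_integral_posterior_mul_condDensity (hk : IsChannel μZ k) (hp : Measurable p)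
    (hp0 : ∀ w, 0 ≤ p w) (hpi : Integrable p (μX.prod μY)) (hpx : ∀ x, 0 < marginal μY p x) :
    ∀ᵐ z ∂μZ, ∀ᵐ y ∂μY,
      Integrable (fun x => posterior μX μY k p z x * condDensity μY p x y) μX ∧
      ∫ x, posterior μX μY k p z x * condDensity μY p x y ∂μX
        = condDensity μY (pushDensity μX k p) z y := by
  filter_upwards [hk.ae_ae_integrable_mul hp hp0 hpi] with z hz
  filter_upwards [hz] with y hy
  have heq : (fun x => posterior μX μY k p z x * condDensity μY p x y)
      = fun x => p (x, y) * k x z / marginal μY (pushDensity μX k p) z := by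
    ext x
    rw [posterior, ← marginal_mul_condDensity (hpx x).ne' y]
    ring
  rw [heq, integral_div]
  exact ⟨hy.div_const _, rfl⟩

lemma ae_ae_lintegral_eq_integral_posterior (hk : IsChannel μZ k) (hp : Measurable p)
    (hp0 : ∀ w, 0 ≤ p w) (hpi : Integrable p (μX.prod μY)) (hpx : ∀ x, 0 < marginal μY p x)
    (hpz : ∀ z, 0 < marginal μY (pushDensity μX k p) z) :
    ∀ᵐ z ∂μZ, ∀ᵐ y ∂μY,
      ∫⁻ x, ENNReal.ofReal (k x z) *
          ENNReal.ofReal (marginal μY p x * log (1 + condDensity μY p x y)) ∂μX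
        = ENNReal.ofReal (marginal μY (pushDensity μX k p) z *
            ∫ x, posterior μX μY k p z x * log (1 + condDensity μY p x y) ∂μX) := by
  have hkm := hk.measurable
  have hf := measurable_condDensity (μY := μY) hp
  have hpxm := measurable_marginal (μY := μY) hp
  filter_upwards [hk.ae_ae_integral_posterior_mul_condDensity hp hp0 hpi hpx] with z hz
  filter_upwards [hz] with y hy
  have hint := hy.1
  have hw0 : ∀ x, 0 ≤ posterior μX μY k p z x := posterior_nonneg hk.nonneg hp0 z
  have hf0 : ∀ x, 0 ≤ condDensity μY p x y := fun x => condDensity_nonneg hp0 x y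
  have hlog := integrable_mul_log_one_add (by unfold posterior; fun_prop) (by fun_prop) hw0 hf0 hint
  rw [← integral_const_mul, ofReal_integral_eq_lintegral_ofReal (hlog.const_mul _)
    (.of_forall fun x => mul_nonneg (hpz z).le
      (mul_nonneg (hw0 x) (log_nonneg (by linarith [hf0 x]))))]
  refine lintegral_congr fun x => ?_
  have hpz' := (hpz z).ne'
  rw [← ENNReal.ofReal_mul (hk.nonneg x z), posterior]
  congr 1
  field_simp

lemma ae_ae_lintegral_le_marginal_mul_log (hk : IsChannel μZ k) (hp : Measurable p)
    (hp0 : ∀ w, 0 ≤ p w) (hpi : Integrable p (μX.prod μY)) (hpx : ∀ x, 0 < marginal μY p x)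
    (hpz : ∀ z, 0 < marginal μY (pushDensity μX k p) z) :
    ∀ᵐ z ∂μZ, ∀ᵐ y ∂μY,
      ∫⁻ x, ENNReal.ofReal (k x z) *
          ENNReal.ofReal (marginal μY p x * log (1 + condDensity μY p x y)) ∂μX
        ≤ ENNReal.ofReal (marginal μY (pushDensity μX k p) z *
            log (1 + condDensity μY (pushDensity μX k p) z y)) := by
  have hkm := hk.measurable
  have hf := measurable_condDensity (μY := μY) hp
  have hpxm := measurable_marginal (μY := μY) hp
  filter_upwards [hk.ae_integral_posterior hp hp0 hpi hpz,
    hk.ae_ae_integral_posterior_mul_condDensity hp hp0 hpi hpx,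
    hk.ae_ae_lintegral_eq_integral_posterior hp hp0 hpi hpx hpz] with z hz1 hz2 hz3
  filter_upwards [hz2, hz3] with y hy hyR
  rw [hyR, ← hy.2]
  refine ENNReal.ofReal_le_ofReal (mul_le_mul_of_nonneg_left ?_ (hpz z).le)
  exact integral_mul_log_one_add_le (by unfold posterior; fun_prop) hf.of_uncurry_right
    (posterior_nonneg hk.nonneg hp0 z) (fun x => condDensity_nonneg hp0 x y) hz1 hy.1

lemma ae_ae_condDensity_eq_of_lintegral_eq (hk : IsChannel μZ k) (hp : Measurable p)
    (hp0 : ∀ w, 0 ≤ p w) (hpi : Integrable p (μX.prod μY)) (hpx : ∀ x, 0 < marginal μY p x)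
    (hpz : ∀ z, 0 < marginal μY (pushDensity μX k p) z) :
    ∀ᵐ z ∂μZ, ∀ᵐ y ∂μY,
      ∫⁻ x, ENNReal.ofReal (k x z) *
          ENNReal.ofReal (marginal μY p x * log (1 + condDensity μY p x y)) ∂μX
        = ENNReal.ofReal (marginal μY (pushDensity μX k p) z *
            log (1 + condDensity μY (pushDensity μX k p) z y)) →
      ∀ᵐ x ∂μX, k x z ≠ 0 → condDensity μY (pushDensity μX k p) z y = condDensity μY p x y := by
  have hkm := hk.measurable
  have hf := measurable_condDensity (μY := μY) hp
  have hpxm := measurable_marginal (μY := μY) hp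
  have hw0 := posterior_nonneg (μX := μX) (μY := μY) hk.nonneg hp0
  have hf0 : ∀ x y, 0 ≤ condDensity μY p x y := condDensity_nonneg hp0
  have hg0 := condDensity_nonneg (μY := μY) (pushDensity_nonneg (μX := μX) hk.nonneg hp0)
  filter_upwards [hk.ae_integral_posterior hp hp0 hpi hpz,
    hk.ae_ae_integral_posterior_mul_condDensity hp hp0 hpi hpx,
    hk.ae_ae_lintegral_eq_integral_posterior hp hp0 hpi hpx hpz] with z hz1 hz2 hz3
  filter_upwards [hz2, hz3] with y hy hyR hRL
  have hI0 : 0 ≤ ∫ x, posterior μX μY k p z x * log (1 + condDensity μY p x y) ∂μX :=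
    integral_nonneg fun x => mul_nonneg (hw0 z x) (log_nonneg (by linarith [hf0 x y]))
  rw [hyR, ENNReal.ofReal_eq_ofReal_iff (mul_nonneg (hpz z).le hI0)
    (mul_nonneg (hpz z).le (log_nonneg (by linarith [hg0 z y])))] at hRL
  have heq := mul_left_cancel₀ (hpz z).ne' hRL
  filter_upwards [ae_eq_integral_of_log_one_add_le (by unfold posterior; fun_prop)
    hf.of_uncurry_right (hw0 z) (fun x => hf0 x y) hz1 hy.1 (by rw [hy.2, heq])] with x hx hkx
  rw [hx (div_ne_zero (mul_ne_zero (hpx x).ne' hkx) (hpz z).ne'), hy.2]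

lemma lintegral_lintegral_marginal_mul_log_le (hk : IsChannel μZ k) (hp : Measurable p)
    (hp0 : ∀ w, 0 < p w) (hpi : Integrable p (μX.prod μY)) (hpx : ∀ x, 0 < marginal μY p x)
    (hcons : ∀ x y, condDensity μY p x y
      = ∫ z, k x z * condDensity μY (pushDensity μX k p) z y ∂μZ) :
    ∫⁻ z, ∫⁻ y, ENNReal.ofReal (marginal μY (pushDensity μX k p) z *
        log (1 + condDensity μY (pushDensity μX k p) z y)) ∂μY ∂μZ
      ≤ ∫⁻ x, ∫⁻ y, ENNReal.ofReal (marginal μY p x *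
          log (1 + condDensity μY p x y)) ∂μY ∂μX := by
  set q := pushDensity μX k p
  have hp0' : ∀ w, 0 ≤ p w := fun w => (hp0 w).le
  have hkm := hk.measurable
  have hpxm := measurable_marginal (μY := μY) hp
  have hg := measurable_condDensity (μY := μY) (measurable_pushDensity (μX := μX) hkm hp)
  calc ∫⁻ z, ∫⁻ y, ENNReal.ofReal (marginal μY q z * log (1 + condDensity μY q z y)) ∂μY ∂μZ
      = ∫⁻ z, ∫⁻ y, ∫⁻ x, ENNReal.ofReal (k x z) * (ENNReal.ofReal (marginal μY p x) *
          ENNReal.ofReal (log (1 + condDensity μY q z y))) ∂μX ∂μY ∂μZ := by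
        refine lintegral_congr_ae ?_
        filter_upwards [hk.ae_marginal_pushDensity hp hp0' hpi,
          hk.ae_integrable_marginal_mul hp hp0' hpi] with z hz hi
        refine lintegral_congr fun y => ?_
        rw [ENNReal.ofReal_mul (marginal_nonneg (pushDensity_nonneg hk.nonneg hp0') z), hz,
          ofReal_integral_eq_lintegral_ofReal hi
            (.of_forall fun x => mul_nonneg (marginal_nonneg hp0' x) (hk.nonneg x z)),
          ← lintegral_mul_const _ (by fun_prop)]
        refine lintegral_congr fun x => ?_
        rw [ENNReal.ofReal_mul (marginal_nonneg hp0' x)]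
        ring
    _ = ∫⁻ x, ∫⁻ y, ∫⁻ z, ENNReal.ofReal (k x z) * (ENNReal.ofReal (marginal μY p x) *
          ENNReal.ofReal (log (1 + condDensity μY q z y))) ∂μZ ∂μY ∂μX :=
        (lintegral_lintegral_lintegral_comm (by fun_prop)).symm
    _ ≤ _ := lintegral_mono fun x => lintegral_mono fun y =>
        hk.lintegral_ofReal_mul_log_le hp hp0 hpx hcons x y

theorem ae_condDensity_pushDensity_eq (hk : IsChannel μZ k) (hp : Measurable p)
    (hp0 : ∀ w, 0 < p w) (hpi : Integrable p (μX.prod μY)) (hpx : ∀ x, 0 < marginal μY p x)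
    (hpz : ∀ z, 0 < marginal μY (pushDensity μX k p) z)
    (hcons : ∀ x y, condDensity μY p x y
      = ∫ z, k x z * condDensity μY (pushDensity μX k p) z y ∂μZ) :
    ∀ᵐ z ∂μZ, ∀ᵐ y ∂μY, ∀ᵐ x ∂μX,
      k x z ≠ 0 → condDensity μY (pushDensity μX k p) z y = condDensity μY p x y := by
  have hp0' : ∀ w, 0 ≤ p w := fun w => (hp0 w).le
  have hkm := hk.measurable
  have hpxm := measurable_marginal (μY := μY) hp
  have hf := measurable_condDensity (μY := μY) hp
  have hqm := measurable_pushDensity (μX := μX) hkm hp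
  have hg := measurable_condDensity (μY := μY) hqm
  have hqzm := measurable_marginal (μY := μY) hqm
  have hR := hk.lintegral_lintegral_lintegral_mul (μX := μX) (μY := μY) (F := fun x y =>
    ENNReal.ofReal (marginal μY p x * log (1 + condDensity μY p x y))) (by fun_prop)
  -- Jensen along `k` bounds the `z`-energy by the `x`-energy, so Jensen along the posterior,
  -- which bounds them the other way, is an equality almost everywhere.
  have hRL := ae_ae_eq_of_ae_ae_le_of_lintegral_le
    (hk.ae_ae_lintegral_le_marginal_mul_log hp hp0' hpi hpx hpz)
    (by rw [hR]; exact lintegral_lintegral_marginal_mul_log_ne_top hp hp0' hpi hpx) (by fun_prop)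
    (by rw [hR]; exact hk.lintegral_lintegral_marginal_mul_log_le hp hp0 hpi hpx hcons)
  filter_upwards [hk.ae_ae_condDensity_eq_of_lintegral_eq hp hp0' hpi hpx hpz, hRL] with z hz hzRL
  filter_upwards [hz, hzRL] with y hy hyRL using hy hyRL

theorem ae_ae_ofReal_klTerm_pushDensity_le (hk : IsChannel μZ k) (hp : Measurable p)
    (hp0 : ∀ w, 0 ≤ p w) (hpi : Integrable p (μX.prod μY)) (hpx : ∀ x, 0 < marginal μY p x)
    {f : X → Y → ℝ} {g : Z → Y → ℝ} (hf0 : ∀ x y, 0 < f x y)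
    (hfg : ∀ᵐ z ∂μZ, ∀ᵐ y ∂μY, ∀ᵐ x ∂μX, k x z ≠ 0 → g z y = f x y) :
    ∀ᵐ z ∂μZ, ∀ᵐ y ∂μY,
      ENNReal.ofReal (klTerm (pushDensity μX k p (z, y))
          (marginal μY (pushDensity μX k p) z * g z y))
        ≤ ∫⁻ x, ENNReal.ofReal (k x z) *
            ENNReal.ofReal (klTerm (p (x, y)) (marginal μY p x * f x y)) ∂μX := by
  filter_upwards [hk.ae_marginal_pushDensity hp hp0 hpi, hk.ae_integrable_marginal_mul hp hp0 hpi,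
    hk.ae_ae_integrable_mul hp hp0 hpi, hfg] with z hz hzi hzy hzfg
  filter_upwards [hzy, hzfg] with y hy hyfg
  have hb : (fun x => marginal μY p x * k x z * g z y)
      =ᵐ[μX] fun x => marginal μY p x * f x y * k x z := by
    filter_upwards [hyfg] with x hx
    by_cases hkx : k x z = 0
    · simp [hkx]
    · rw [hx hkx]; ring
  have hbi : Integrable (fun x => marginal μY p x * f x y * k x z) μX :=
    (hzi.mul_const (g z y)).congr hb
  have hbint : ∫ x, marginal μY p x * f x y * k x z ∂μX
      = marginal μY (pushDensity μX k p) z * g z y := by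
    rw [← integral_congr_ae hb, integral_mul_const, hz]
  have hlogsum := ofReal_klTerm_integral_le_lintegral hy hbi
    (fun x => mul_nonneg (hp0 _) (hk.nonneg x z))
    (fun x => mul_nonneg (mul_pos (hpx x) (hf0 x y)).le (hk.nonneg x z)) fun x hx =>
      by rw [(mul_eq_zero.1 hx).resolve_left (mul_pos (hpx x) (hf0 x y)).ne', mul_zero]
  rw [hbint] at hlogsum
  refine hlogsum.trans_eq (lintegral_congr fun x => ?_)
  rw [mul_comm _ (k x z), mul_comm _ (k x z), klTerm_mul_mul, ENNReal.ofReal_mul (hk.nonneg x z)]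

theorem integral_marginal_mul_condKL_pushDensity_le (hk : IsChannel μZ k) {s t : X × Y → ℝ}
    (hs : Measurable s) (ht : Measurable t) (hs0 : ∀ w, 0 < s w) (ht0 : ∀ w, 0 ≤ t w)
    (hsi : Integrable s (μX.prod μY)) (hti : Integrable t (μX.prod μY))
    (hsx : ∀ x, 0 < marginal μY s x) (htx : ∀ x, 0 < marginal μY t x)
    (hsz : ∀ z, 0 < marginal μY (pushDensity μX k s) z)
    (htz : ∀ z, 0 < marginal μY (pushDensity μX k t) z)
    (hcons : ∀ x y, condDensity μY s x y
      = ∫ z, k x z * condDensity μY (pushDensity μX k s) z y ∂μZ)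
    {N : ℝ} (hts : ∀ w, t w ≤ N * s w)
    (hint : Integrable (fun x => marginal μY t x * condKL μY t s x) μX) :
    ∫ z, marginal μY (pushDensity μX k t) z *
        condKL μY (pushDensity μX k t) (pushDensity μX k s) z ∂μZ
      ≤ ∫ x, marginal μY t x * condKL μY t s x ∂μX := by
  have hkl0 : ∀ x y, 0 ≤ klTerm (t (x, y)) (marginal μY t x * condDensity μY s x y) :=
    fun x y => klTerm_nonneg (ht0 _) (mul_pos (htx x) (div_pos (hs0 _) (hsx x))).le
      fun h => absurd h (mul_pos (htx x) (div_pos (hs0 _) (hsx x))).ne'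
  have hslice := fun x => integrable_klTerm_condDensity hs0 ht0 (hsx x) (htx x)
    fun y => hts (x, y)
  have hlogsum := hk.ae_ae_ofReal_klTerm_pushDensity_le ht ht0 hti htx
    (f := condDensity μY s) (fun x y => div_pos (hs0 _) (hsx x))
    (hk.ae_condDensity_pushDensity_eq hs hs0 hsi hsx hsz hcons)
  have htxm := measurable_marginal (μY := μY) ht
  have hsm := measurable_condDensity (μY := μY) hs
  have hLHS := fun z => marginal_mul_condKL (μY := μY) (hsz z) (htz z)
  have hRHS := fun x => marginal_mul_condKL (μY := μY) (hsx x) (htx x)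
  simp_rw [hLHS, hRHS] at hint ⊢
  refine (ENNReal.ofReal_le_ofReal_iff (integral_nonneg fun x => integral_nonneg (hkl0 x))).1 ?_
  rw [ofReal_integral_eq_lintegral_ofReal hint (.of_forall fun x => integral_nonneg (hkl0 x)),
    lintegral_congr fun x =>
      ofReal_integral_eq_lintegral_ofReal (hslice x) (.of_forall (hkl0 x)),
    ← hk.lintegral_lintegral_lintegral_mul (by fun_prop)]
  refine (ofReal_integral_le_lintegral_ofReal _).trans (lintegral_mono_ae ?_)
  filter_upwards [hlogsum] with z hz
  exact (ofReal_integral_le_lintegral_ofReal _).trans (lintegral_mono_ae hz)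

end IsChannel

theorem stmt9_general {X Y Z : Type*} [MeasurableSpace X] [MeasurableSpace Y] [MeasurableSpace Z]
    (μX : Measure X) (μY : Measure Y) (μZ : Measure Z)
    [SigmaFinite μX] [SigmaFinite μY] [SigmaFinite μZ]
    (pSxy pTxy : X × Y → ℝ) (k : X → Z → ℝ) (N : ℝ)
    (pSx pTx : X → ℝ) (pSz pTz : Z → ℝ)
    (pSzy pTzy : Z × Y → ℝ)
    (pSyx pTyx : X → Y → ℝ) (pSyz pTyz : Z → Y → ℝ)
    -- joint densities and the shared channel
    (hSm : Measurable pSxy) (hTm : Measurable pTxy)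
    (hkm : Measurable (fun w : X × Z => k w.1 w.2))
    (hS0 : ∀ w, 0 < pSxy w) (hT0 : ∀ w, 0 ≤ pTxy w)
    (hS1 : ∫ w, pSxy w ∂μX.prod μY = 1) (hT1 : ∫ w, pTxy w ∂μX.prod μY = 1)
    (hk0 : ∀ x z, 0 ≤ k x z) (hk1 : ∀ x, ∫ z, k x z ∂μZ = 1)
    -- marginals
    (hpSx : ∀ x, pSx x = ∫ y, pSxy (x, y) ∂μY)
    (hpTx : ∀ x, pTx x = ∫ y, pTxy (x, y) ∂μY)
    (hpSzy : ∀ z y, pSzy (z, y) = ∫ x, pSxy (x, y) * k x z ∂μX)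
    (hpTzy : ∀ z y, pTzy (z, y) = ∫ x, pTxy (x, y) * k x z ∂μX)
    (hpSz : ∀ z, pSz z = ∫ y, pSzy (z, y) ∂μY)
    (hpTz : ∀ z, pTz z = ∫ y, pTzy (z, y) ∂μY)
    -- conditionals
    (hpSyx : ∀ x y, pSyx x y = pSxy (x, y) / pSx x)
    (hpTyx : ∀ x y, pTyx x y = pTxy (x, y) / pTx x)
    (hpSyz : ∀ z y, pSyz z y = pSzy (z, y) / pSz z)
    (hpTyz : ∀ z y, pTyz z y = pTzy (z, y) / pTz z)
    -- positivity of the denominators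
    (hpSx0 : ∀ x, 0 < pSx x) (hpTx0 : ∀ x, 0 < pTx x)
    (hpSz0 : ∀ z, 0 < pSz z) (hpTz0 : ∀ z, 0 < pTz z)
    -- Assumption 2 (consistency): p_S(y|x) = E_{p(z|x)}[p_S(y|z)]
    (hcons : ∀ x y, pSyx x y = ∫ z, k x z * pSyz z y ∂μZ)
    -- bounded density ratio
    (hratio : ∀ w, pTxy w ≤ N * pSxy w)
    -- integrability of the conditional KL terms
    (hintx : Integrable (fun x => pTx x *
      ∫ y, pTyx x y * Real.log (pTyx x y / pSyx x y) ∂μY) μX) :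
    ∫ z, pTz z * ∫ y, pTyz z y * Real.log (pTyz z y / pSyz z y) ∂μY ∂μZ
      ≤ ∫ x, pTx x * ∫ y, pTyx x y * Real.log (pTyx x y / pSyx x y) ∂μY ∂μX := by
  obtain rfl : pSx = marginal μY pSxy := funext hpSx
  obtain rfl : pTx = marginal μY pTxy := funext hpTx
  obtain rfl : pSzy = pushDensity μX k pSxy := funext fun w => hpSzy w.1 w.2
  obtain rfl : pTzy = pushDensity μX k pTxy := funext fun w => hpTzy w.1 w.2
  obtain rfl : pSz = marginal μY (pushDensity μX k pSxy) := funext hpSz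
  obtain rfl : pTz = marginal μY (pushDensity μX k pTxy) := funext hpTz
  obtain rfl : pSyx = condDensity μY pSxy := funext₂ hpSyx
  obtain rfl : pTyx = condDensity μY pTxy := funext₂ hpTyx
  obtain rfl : pSyz = condDensity μY (pushDensity μX k pSxy) := funext₂ hpSyz
  obtain rfl : pTyz = condDensity μY (pushDensity μX k pTxy) := funext₂ hpTyz
  exact IsChannel.integral_marginal_mul_condKL_pushDensity_le ⟨hkm, hk0, hk1⟩ hSm hTm hS0 hT0
    (.of_integral_ne_zero (by rw [hS1]; exact one_ne_zero))
    (.of_integral_ne_zero (by rw [hT1]; exact one_ne_zero))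
    hpSx0 hpTx0 hpSz0 hpTz0 hcons hratio hintx

/-- Proposition 2: under sufficiency `I_S(z;y) = I_S(x;y)`, consistency
`p_S(y|x) = E_{p(z|x)}[p_S(y|z)]`, and bounded ratio `p_T(x,y)/p_S(x,y) ≤ N`,
the conditional misalignment in representation space is bounded by the one in
input space:
`E_{p_T(z)}[KL(p_T(y|z)‖p_S(y|z))] ≤ E_{p_T(x)}[KL(p_T(y|x)‖p_S(y|x))]`. -/
theorem stmt9 {X Y Z : Type*} [MeasurableSpace X] [MeasurableSpace Y] [MeasurableSpace Z]
    (μX : Measure X) (μY : Measure Y) (μZ : Measure Z)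
    [SigmaFinite μX] [SigmaFinite μY] [SigmaFinite μZ]
    (pSxy pTxy : X × Y → ℝ) (k : X → Z → ℝ) (N : ℝ)
    (pSx pTx : X → ℝ) (pSy : Y → ℝ) (pSz pTz : Z → ℝ)
    (pSzy pTzy : Z × Y → ℝ)
    (pSyx pTyx : X → Y → ℝ) (pSyz pTyz : Z → Y → ℝ)
    -- joint densities and the shared channel
    (hSm : Measurable pSxy) (hTm : Measurable pTxy)
    (hkm : Measurable (fun w : X × Z => k w.1 w.2))
    (hS0 : ∀ w, 0 < pSxy w) (hT0 : ∀ w, 0 ≤ pTxy w)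
    (hS1 : ∫ w, pSxy w ∂μX.prod μY = 1) (hT1 : ∫ w, pTxy w ∂μX.prod μY = 1)
    (hk0 : ∀ x z, 0 ≤ k x z) (hk1 : ∀ x, ∫ z, k x z ∂μZ = 1)
    -- marginals
    (hpSx : ∀ x, pSx x = ∫ y, pSxy (x, y) ∂μY)
    (hpTx : ∀ x, pTx x = ∫ y, pTxy (x, y) ∂μY)
    (hpSy : ∀ y, pSy y = ∫ x, pSxy (x, y) ∂μX)
    (hpSzy : ∀ z y, pSzy (z, y) = ∫ x, pSxy (x, y) * k x z ∂μX)
    (hpTzy : ∀ z y, pTzy (z, y) = ∫ x, pTxy (x, y) * k x z ∂μX)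
    (hpSz : ∀ z, pSz z = ∫ y, pSzy (z, y) ∂μY)
    (hpTz : ∀ z, pTz z = ∫ y, pTzy (z, y) ∂μY)
    -- conditionals
    (hpSyx : ∀ x y, pSyx x y = pSxy (x, y) / pSx x)
    (hpTyx : ∀ x y, pTyx x y = pTxy (x, y) / pTx x)
    (hpSyz : ∀ z y, pSyz z y = pSzy (z, y) / pSz z)
    (hpTyz : ∀ z y, pTyz z y = pTzy (z, y) / pTz z)
    -- positivity of the denominators
    (hpSx0 : ∀ x, 0 < pSx x) (hpTx0 : ∀ x, 0 < pTx x)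
    (hpSz0 : ∀ z, 0 < pSz z) (hpTz0 : ∀ z, 0 < pTz z)
    -- Assumption 1 (sufficiency): I_S(z;y) = I_S(x;y)
    (hsuff : ∫ w, pSzy w * Real.log (pSzy w / (pSz w.1 * pSy w.2)) ∂μZ.prod μY
      = ∫ w, pSxy w * Real.log (pSxy w / (pSx w.1 * pSy w.2)) ∂μX.prod μY)
    -- Assumption 2 (consistency): p_S(y|x) = E_{p(z|x)}[p_S(y|z)]
    (hcons : ∀ x y, pSyx x y = ∫ z, k x z * pSyz z y ∂μZ)
    -- bounded density ratio
    (hratio : ∀ w, pTxy w ≤ N * pSxy w)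
    -- integrability of the conditional KL terms
    (hintz : Integrable (fun z => pTz z *
      ∫ y, pTyz z y * Real.log (pTyz z y / pSyz z y) ∂μY) μZ)
    (hintx : Integrable (fun x => pTx x *
      ∫ y, pTyx x y * Real.log (pTyx x y / pSyx x y) ∂μY) μX) :
    ∫ z, pTz z * ∫ y, pTyz z y * Real.log (pTyz z y / pSyz z y) ∂μY ∂μZ
      ≤ ∫ x, pTx x * ∫ y, pTyx x y * Real.log (pTyx x y / pSyx x y) ∂μY ∂μX :=
  stmt9_general μX μY μZ pSxy pTxy k N pSx pTx pSz pTz pSzy pTzy pSyx pTyx pSyz pTyz hSm hTm hkm hS0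
    hT0 hS1 hT1 hk0 hk1 hpSx hpTx hpSzy hpTzy hpSz hpTz hpSyx hpTyx hpSyz hpTyz hpSx0 hpTx0 hpSz0
    hpTz0 hcons hratio hintx
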